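/- arXiv:1810.01659 — 4 statements merged into one kernel-verified Lean document; each statement's English description precedes it below -/
import Mathlib

section
/- Let ψ : ℝ³ → ℂ⁴ be differentiable at a point x ≠ 0. Then −i(α₁ ∂₁ψ(x) + α₂ ∂₂ψ(x) + α₃ ∂₃ψ(x)) = −i (Σⱼ αⱼ xⱼ/|x|) · (∂_rψ(x) + ψ(x)/|x| − (ψ(x) + (2S·Lψ)(x))/|x|); that is, the Dirac operator factorizes as −iα·∇ = −i(α·x/|x|)(∂_r + 1/|x| − (1 + 2S·L)/|x|) away from the origin. -/
open MeasureTheory Real Filter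

noncomputable section

abbrev E3 := EuclideanSpace ℝ (Fin 3)
abbrev C4 := EuclideanSpace ℂ (Fin 4)

/-- Pauli matrices. -/
def pauli : Fin 3 → Matrix (Fin 2) (Fin 2) ℂ
  | 0 => !![0, 1; 1, 0]
  | 1 => !![0, -Complex.I; Complex.I, 0]
  | 2 => !![1, 0; 0, -1]

/-- Dirac matrices αⱼ = [[0, σⱼ], [σⱼ, 0]]. -/
def diracAlpha (j : Fin 3) : Matrix (Fin 4) (Fin 4) ℂ :=
  Matrix.reindex finSumFinEquiv finSumFinEquiv
    (Matrix.fromBlocks 0 (pauli j) (pauli j) 0)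

/-- Dirac matrix β = [[I₂, 0], [0, -I₂]]. -/
def diracBeta : Matrix (Fin 4) (Fin 4) ℂ :=
  Matrix.reindex finSumFinEquiv finSumFinEquiv
    (Matrix.fromBlocks (1 : Matrix (Fin 2) (Fin 2) ℂ) 0 0 (-1 : Matrix (Fin 2) (Fin 2) ℂ))

/-- Block-diagonal matrix diag(σⱼ, σⱼ) (twice the spin angular momentum matrices). -/
def spinMat (j : Fin 3) : Matrix (Fin 4) (Fin 4) ℂ :=
  Matrix.reindex finSumFinEquiv finSumFinEquiv
    (Matrix.fromBlocks (pauli j) 0 0 (pauli j))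

/-- Action of a 4 × 4 matrix on ℂ⁴ with the Euclidean norm. -/
def mulVecE (M : Matrix (Fin 4) (Fin 4) ℂ) (v : C4) : C4 :=
  Matrix.toEuclideanLin M v

/-- The partial derivative ∂ⱼψ(x). -/
def pderiv3 (j : Fin 3) (ψ : E3 → C4) (x : E3) : C4 :=
  fderiv ℝ ψ x (EuclideanSpace.single j 1)

/-- The free Dirac operator (-iα·∇ψ)(x). -/
def diracD (ψ : E3 → C4) (x : E3) : C4 :=
  (-Complex.I) • ∑ j : Fin 3, mulVecE (diracAlpha j) (pderiv3 j ψ x)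

/-- The radial derivative ∂_rψ(x) = Σⱼ (xⱼ/|x|) ∂ⱼψ(x). -/
def radialDeriv (ψ : E3 → C4) (x : E3) : C4 :=
  ∑ j : Fin 3, (x j / ‖x‖) • pderiv3 j ψ x

/-- The orbital angular momentum (Lⱼψ)(x) = -i (x × ∇)ⱼ ψ(x). -/
def angMom (j : Fin 3) (ψ : E3 → C4) (x : E3) : C4 :=
  (-Complex.I) • ((x (j + 1)) • pderiv3 (j + 2) ψ x - (x (j + 2)) • pderiv3 (j + 1) ψ x)

/-- The spin-orbit term (2S·Lψ)(x) = Σⱼ diag(σⱼ,σⱼ) (Lⱼψ)(x). -/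
def twoSL (ψ : E3 → C4) (x : E3) : C4 :=
  ∑ j : Fin 3, mulVecE (spinMat j) (angMom j ψ x)


/-!
The Dirac matrices satisfy `αⱼαₖ = δⱼₖ + i εⱼₖₗ Σₗ` with `Σₗ = diag(σₗ, σₗ)`, inherited from the
Pauli algebra. Hence for scalars `a` and a triple of spinors `v`,
`(α·a)(α·v) = a·v + i Σ·(a × v)`. Taking `a = x/|x|`, a unit vector, gives `(α·a)² = 1`, so
`α·∇ = (α·a)(α·a)(α·∇) = (α·a)(∂_r + i Σ·(x × ∇)/|x|)`, and `i Σ·(x × ∇) = -2S·L`.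
-/

open Complex

lemma mulVecE_mul (M N : Matrix (Fin 4) (Fin 4) ℂ) (v : C4) :
    mulVecE (M * N) v = mulVecE M (mulVecE N v) := by
  simp [mulVecE]

lemma mulVecE_one (v : C4) : mulVecE 1 v = v := by
  simp [mulVecE]

lemma mulVecE_smul (c : ℂ) (M : Matrix (Fin 4) (Fin 4) ℂ) (v : C4) :
    mulVecE (c • M) v = c • mulVecE M v := by
  simp [mulVecE]

lemma mulVecE_sum_smul {ι : Type*} [Fintype ι] (a : ι → ℂ) (M : ι → Matrix (Fin 4) (Fin 4) ℂ)
    (v : C4) :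
    mulVecE (∑ j, a j • M j) v = ∑ j, a j • mulVecE (M j) v := by
  simp [mulVecE]

lemma pauli_mul_self (j : Fin 3) : pauli j * pauli j = 1 := by
  fin_cases j <;> ext a b <;> fin_cases a <;> fin_cases b <;> simp [pauli, Matrix.mul_apply]

lemma pauli_mul_pauli_succ (j : Fin 3) : pauli j * pauli (j + 1) = I • pauli (j + 2) := by
  fin_cases j <;> ext a b <;> fin_cases a <;> fin_cases b <;> simp [pauli, Matrix.mul_apply]

lemma pauli_succ_mul_pauli (j : Fin 3) : pauli (j + 1) * pauli j = -I • pauli (j + 2) := by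
  fin_cases j <;> ext a b <;> fin_cases a <;> fin_cases b <;> simp [pauli, Matrix.mul_apply]

lemma diracAlpha_mul_diracAlpha (j k : Fin 3) :
    diracAlpha j * diracAlpha k = Matrix.reindex finSumFinEquiv finSumFinEquiv
      (Matrix.fromBlocks (pauli j * pauli k) 0 0 (pauli j * pauli k)) := by
  simp [diracAlpha, Matrix.submatrix_mul_equiv, Matrix.fromBlocks_multiply]

lemma diracAlpha_mul_self (j : Fin 3) : diracAlpha j * diracAlpha j = 1 := by
  simp [diracAlpha_mul_diracAlpha, pauli_mul_self]

lemma diracAlpha_mul_diracAlpha_succ (j : Fin 3) :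
    diracAlpha j * diracAlpha (j + 1) = I • spinMat (j + 2) := by
  simp only [diracAlpha_mul_diracAlpha, pauli_mul_pauli_succ, spinMat,
    ← Matrix.coe_reindexLinearEquiv ℂ ℂ]
  rw [← map_smul, Matrix.fromBlocks_smul, smul_zero]

lemma diracAlpha_succ_mul_diracAlpha (j : Fin 3) :
    diracAlpha (j + 1) * diracAlpha j = -I • spinMat (j + 2) := by
  simp only [diracAlpha_mul_diracAlpha, pauli_succ_mul_pauli, spinMat,
    ← Matrix.coe_reindexLinearEquiv ℂ ℂ]
  rw [← map_smul, Matrix.fromBlocks_smul, smul_zero]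

def alphaDot (a : Fin 3 → ℂ) : Matrix (Fin 4) (Fin 4) ℂ := ∑ j, a j • diracAlpha j

lemma mulVecE_alphaDot_sum (a : Fin 3 → ℂ) (v : Fin 3 → C4) :
    mulVecE (alphaDot a) (∑ k, mulVecE (diracAlpha k) (v k)) =
      ∑ j, a j • v j +
        I • ∑ l, mulVecE (spinMat l) (a (l + 1) • v (l + 2) - a (l + 2) • v (l + 1)) := by
  have h01 : diracAlpha 0 * diracAlpha 1 = I • spinMat 2 := diracAlpha_mul_diracAlpha_succ 0
  have h12 : diracAlpha 1 * diracAlpha 2 = I • spinMat 0 := diracAlpha_mul_diracAlpha_succ 1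
  have h20 : diracAlpha 2 * diracAlpha 0 = I • spinMat 1 := diracAlpha_mul_diracAlpha_succ 2
  have h10 : diracAlpha 1 * diracAlpha 0 = -I • spinMat 2 := diracAlpha_succ_mul_diracAlpha 0
  have h21 : diracAlpha 2 * diracAlpha 1 = -I • spinMat 0 := diracAlpha_succ_mul_diracAlpha 1
  have h02 : diracAlpha 0 * diracAlpha 2 = -I • spinMat 1 := diracAlpha_succ_mul_diracAlpha 2
  have expand : mulVecE (alphaDot a) (∑ k, mulVecE (diracAlpha k) (v k)) =
      ∑ j, ∑ k, a j • mulVecE (diracAlpha j * diracAlpha k) (v k) := by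
    rw [alphaDot, mulVecE_sum_smul]
    refine Finset.sum_congr rfl fun j _ => ?_
    simp only [mulVecE_mul]
    simp only [mulVecE, map_sum, Finset.smul_sum]
  rw [expand]
  simp only [Fin.sum_univ_three, Fin.isValue, Fin.reduceAdd, diracAlpha_mul_self, h01, h12, h20,
    h10, h21, h02, mulVecE_smul, mulVecE_one]
  simp only [mulVecE, map_sub, map_smul]
  module

lemma mulVecE_alphaDot_alphaDot (a : Fin 3 → ℂ) (ha : ∑ j, a j ^ 2 = 1) (w : C4) :
    mulVecE (alphaDot a) (mulVecE (alphaDot a) w) = w := by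
  have hw : mulVecE (alphaDot a) w = ∑ k, mulVecE (diracAlpha k) (a k • w) := by
    simp [alphaDot, mulVecE]
  rw [hw, mulVecE_alphaDot_sum]
  simp [smul_smul, mul_comm, ← Finset.sum_smul, ← sq, ha, mulVecE]

lemma sum_sq_div_norm_eq_one {ι : Type*} [Fintype ι] {x : EuclideanSpace ℝ ι} (hx : x ≠ 0) :
    ∑ i, (x i / ‖x‖) ^ 2 = 1 := by
  have hr : ‖x‖ ≠ 0 := norm_ne_zero_iff.mpr hx
  simp_rw [div_pow, ← Finset.sum_div, ← EuclideanSpace.real_norm_sq_eq,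
    div_self (pow_ne_zero 2 hr)]

lemma inv_norm_smul_angMom (ψ : E3 → C4) (x : E3) (j : Fin 3) :
    ‖x‖⁻¹ • angMom j ψ x = -I • (((x (j + 1) / ‖x‖ : ℝ) : ℂ) • pderiv3 (j + 2) ψ x -
      ((x (j + 2) / ‖x‖ : ℝ) : ℂ) • pderiv3 (j + 1) ψ x) := by
  simp only [angMom, Complex.coe_smul]
  module

theorem dirac_op_factorization_general (ψ : E3 → C4) (x : E3) (hx : x ≠ 0) :
    diracD ψ x =
      (-Complex.I) • mulVecE (∑ j : Fin 3, ((x j / ‖x‖ : ℝ) : ℂ) • diracAlpha j)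
        (radialDeriv ψ x + ‖x‖⁻¹ • ψ x - ‖x‖⁻¹ • (ψ x + twoSL ψ x)) := by
  set a : Fin 3 → ℂ := fun j => ((x j / ‖x‖ : ℝ) : ℂ)
  have ha : ∑ j, a j ^ 2 = 1 := by
    simp only [a, ← Complex.ofReal_pow, ← Complex.ofReal_sum, sum_sq_div_norm_eq_one hx,
      Complex.ofReal_one]
  have hrad : radialDeriv ψ x = ∑ j, a j • pderiv3 j ψ x := by
    simp only [radialDeriv, a, Complex.coe_smul]
  have hspin : ‖x‖⁻¹ • twoSL ψ x = -I • ∑ l, mulVecE (spinMat l)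
      (a (l + 1) • pderiv3 (l + 2) ψ x - a (l + 2) • pderiv3 (l + 1) ψ x) := by
    simp only [twoSL, Finset.smul_sum, mulVecE, ← LinearMap.map_smul_of_tower,
      inv_norm_smul_angMom, a]
  calc diracD ψ x
      = -I • mulVecE (alphaDot a)
          (mulVecE (alphaDot a) (∑ k, mulVecE (diracAlpha k) (pderiv3 k ψ x))) := by
        rw [mulVecE_alphaDot_alphaDot a ha, diracD]
    _ = _ := by
        rw [mulVecE_alphaDot_sum, smul_add, hrad, hspin]
        congr 2
        module

/-- factorization of the Dirac operator away from the origin. -/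
theorem dirac_op_factorization (ψ : E3 → C4) (x : E3) (hx : x ≠ 0)
    (hd : DifferentiableAt ℝ ψ x) :
    diracD ψ x =
      (-Complex.I) • mulVecE (∑ j : Fin 3, ((x j / ‖x‖ : ℝ) : ℂ) • diracAlpha j)
        (radialDeriv ψ x + ‖x‖⁻¹ • ψ x - ‖x‖⁻¹ • (ψ x + twoSL ψ x)) :=
  dirac_op_factorization_general ψ x hx
end
end

section
/- Let φ : ℝ → ℂ be continuously differentiable with compact support and let R > 0. Then ∫₀^∞ r |φ'(r)|² dr ≥ (1/4) ∫₀^∞ |φ(r) − φ(R)|² / (r (log(r/R))²) dr. -/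
/-!
With `L r = log (r / R)` and `u = φ - φ R`, the function `G = ‖u‖² / L` has derivative
`G' = 2⟪u, u'⟫ / L - ‖u‖² / (r L²)`, and expanding `0 ≤ r ‖u' - u / (2 r L)‖²` gives
`r ‖u'‖² ≥ ‖u‖² / (4 r L²) + G' / 2` pointwise. Since `G` tends to `0` at `0⁺` and at `∞`
(where `|L| → ∞` and `u` is bounded) and at `R` (where `u` and `L` both vanish to first order),
`G'` integrates to `0` over `(0, ∞)`, which gives the inequality. The right-hand side is
integrable because `1 / (r L²) = (-1 / L)'` near `0` and `∞`, and `|r - R| ≤ max r R * |L|`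
near `R`.
-/

open MeasureTheory Real Filter Topology Set
open scoped RealInnerProductSpace

section LogHardy

variable {E : Type*} [NormedAddCommGroup E] {R r : ℝ}

theorem log_div_ne_zero (hR : 0 < R) (hr : 0 < r) (hne : r ≠ R) : log (r / R) ≠ 0 :=
  log_ne_zero_of_pos_of_ne_one (div_pos hr hR) (div_ne_one_of_ne hne)

theorem hasDerivAt_log_div (hR : R ≠ 0) (hr : r ≠ 0) :
    HasDerivAt (fun x => log (x / R)) r⁻¹ r := by
  convert ((hasDerivAt_id' r).div_const R).log (div_ne_zero hr hR) using 1
  field_simp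

theorem abs_sub_le_max_mul_abs_log_div (hR : 0 < R) (hr : 0 < r) :
    |r - R| ≤ max r R * |log (r / R)| := by
  have hlow : r - R ≤ r * log (r / R) := by
    have := mul_le_mul_of_nonneg_left (one_sub_inv_le_log_of_pos (div_pos hr hR)) hr.le
    rwa [inv_div, mul_sub, mul_one, mul_div_cancel₀ _ hr.ne'] at this
  have hup : R * log (r / R) ≤ r - R := by
    have := mul_le_mul_of_nonneg_left (log_le_sub_one_of_pos (div_pos hr hR)) hR.le
    rwa [mul_sub, mul_one, mul_div_cancel₀ _ hR.ne'] at this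
  rcases le_total r R with h | h
  · rw [max_eq_right h, abs_of_nonpos (sub_nonpos.2 h),
      abs_of_nonpos (log_nonpos (div_pos hr hR).le ((div_le_one hR).2 h))]
    linarith
  · rw [max_eq_left h, abs_of_nonneg (sub_nonneg.2 h),
      abs_of_nonneg (log_nonneg ((one_le_div hR).2 h))]
    linarith

theorem div_mul_log_div_sq_le {x M : ℝ} (hR : 0 < R) (hr : 0 < r) (hx0 : 0 ≤ x)
    (hx : x ≤ M * |r - R|) : x ^ 2 / (r * log (r / R) ^ 2) ≤ M ^ 2 * max r R ^ 2 / r := by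
  rcases eq_or_ne (log (r / R)) 0 with hL | hL
  · rw [hL, zero_pow two_ne_zero, mul_zero, div_zero]
    positivity
  have hsq : x ^ 2 ≤ M ^ 2 * (max r R * log (r / R)) ^ 2 := by
    calc x ^ 2 ≤ (M * |r - R|) ^ 2 := pow_le_pow_left₀ hx0 hx 2
      _ = M ^ 2 * |r - R| ^ 2 := by ring
      _ ≤ M ^ 2 * |max r R * log (r / R)| ^ 2 := by
        refine mul_le_mul_of_nonneg_left (pow_le_pow_left₀ (abs_nonneg _) ?_ 2) (sq_nonneg M)
        rw [abs_mul, abs_of_pos (hr.trans_le (le_max_left r R))]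
        exact abs_sub_le_max_mul_abs_log_div hR hr
      _ = M ^ 2 * (max r R * log (r / R)) ^ 2 := by rw [sq_abs]
  rw [div_le_div_iff₀ (by positivity) hr]
  nlinarith

theorem tendsto_inv_log_div_nhdsGT_zero (hR : 0 < R) :
    Tendsto (fun r => (log (r / R))⁻¹) (𝓝[>] 0) (𝓝 0) := by
  refine tendsto_inv_atBot_zero.comp (tendsto_log_nhdsGT_zero.comp ?_)
  have h := ((continuous_id.div_const R).tendsto' 0 0 (zero_div R)).mono_left
    (nhdsWithin_le_nhds (s := Ioi 0))
  exact tendsto_nhdsWithin_iff.2 ⟨h, eventually_nhdsWithin_of_forall fun x hx => div_pos hx hR⟩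

theorem tendsto_inv_log_div_atTop (hR : 0 < R) :
    Tendsto (fun r => (log (r / R))⁻¹) atTop (𝓝 0) :=
  tendsto_inv_atTop_zero.comp (tendsto_log_atTop.comp (tendsto_id.atTop_div_const hR))

theorem hasDerivAt_neg_inv_log_div (hR : R ≠ 0) (hr : r ≠ 0) (hL : log (r / R) ≠ 0) :
    HasDerivAt (fun x => -(log (x / R))⁻¹) (r * log (r / R) ^ 2)⁻¹ r := by
  refine ((hasDerivAt_log_div hR hr).inv hL).neg.congr_deriv ?_
  rw [neg_div, neg_neg, div_eq_mul_inv, mul_inv]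

theorem integrableOn_Ioc_inv_mul_log_div_sq {a : ℝ} (hR : 0 < R) (ha : a < R) :
    IntegrableOn (fun r => (r * log (r / R) ^ 2)⁻¹) (Ioc 0 a) := by
  refine intervalIntegral.integrableOn_deriv_of_nonneg (g := fun x => -(log (x / R))⁻¹)
    (fun x hx => ?_) (fun x hx => hasDerivAt_neg_inv_log_div hR.ne' hx.1.ne'
      (log_div_ne_zero hR hx.1 (by linarith [hx.2])))
    (fun x hx => inv_nonneg.2 (mul_nonneg hx.1.le (sq_nonneg _)))
  rcases hx.1.eq_or_lt with rfl | hx0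
  · -- the junk value `log 0 = 0` agrees with the limit of `-(log (x / R))⁻¹` at `0⁺`
    have h : ContinuousWithinAt (fun x => -(log (x / R))⁻¹) (Ioi 0) 0 := by
      simpa [ContinuousWithinAt] using (tendsto_inv_log_div_nhdsGT_zero hR).neg
    exact (continuousWithinAt_Ioi_iff_Ici.1 h).mono Icc_subset_Ici_self
  · exact (hasDerivAt_neg_inv_log_div hR.ne' hx0.ne'
      (log_div_ne_zero hR hx0 (by linarith [hx.2]))).continuousAt.continuousWithinAt

theorem integrableOn_Ioi_inv_mul_log_div_sq {b : ℝ} (hR : 0 < R) (hb : R < b) :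
    IntegrableOn (fun r => (r * log (r / R) ^ 2)⁻¹) (Ioi b) := by
  have hderiv : ∀ x ∈ Ici b,
      HasDerivAt (fun x => -(log (x / R))⁻¹) (x * log (x / R) ^ 2)⁻¹ x := fun x hx =>
    have hRx : R < x := hb.trans_le hx
    hasDerivAt_neg_inv_log_div hR.ne' (hR.trans hRx).ne' (log_div_ne_zero hR (hR.trans hRx) hRx.ne')
  refine integrableOn_Ioi_deriv_of_nonneg' (l := 0) hderiv
    (fun x hx => inv_nonneg.2 (mul_nonneg (hR.trans (hb.trans hx.out)).le (sq_nonneg _))) ?_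
  simpa using (tendsto_inv_log_div_atTop hR).neg

theorem integrableOn_norm_sq_div_mul_log_div_sq {u : ℝ → E} {C M : ℝ} (hR : 0 < R)
    (hu : Continuous u) (hC : ∀ x, ‖u x‖ ≤ C) (hM : ∀ x, ‖u x‖ ≤ M * |x - R|) :
    IntegrableOn (fun r => ‖u r‖ ^ 2 / (r * log (r / R) ^ 2)) (Ioi 0) := by
  have hmeas : Measurable (fun r => ‖u r‖ ^ 2 / (r * log (r / R) ^ 2)) :=
    (hu.norm.pow 2).measurable.div (by fun_prop)
  have hfar : IntegrableOn (fun r => ‖u r‖ ^ 2 / (r * log (r / R) ^ 2))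
      (Ioc 0 (R / 2) ∪ Ioi (2 * R)) := by
    refine Integrable.mono' (((integrableOn_Ioc_inv_mul_log_div_sq hR (by linarith)).union
      (integrableOn_Ioi_inv_mul_log_div_sq hR (by linarith))).const_mul (C ^ 2))
      hmeas.aestronglyMeasurable (ae_restrict_of_forall_mem (measurableSet_Ioc.union
        measurableSet_Ioi) fun r hr => ?_)
    have hr0 : 0 ≤ r := hr.elim (fun h => h.1.le) fun h => by linarith [mem_Ioi.1 h]
    rw [norm_of_nonneg (by positivity), ← div_eq_mul_inv]
    exact div_le_div_of_nonneg_right (pow_le_pow_left₀ (norm_nonneg _) (hC r) 2) (by positivity)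
  have hnear : IntegrableOn (fun r => ‖u r‖ ^ 2 / (r * log (r / R) ^ 2))
      (Icc (R / 2) (2 * R)) := by
    refine Measure.integrableOn_of_bounded (M := M ^ 2 * (2 * R) ^ 2 / (R / 2))
      measure_Icc_lt_top.ne hmeas.aestronglyMeasurable
      (ae_restrict_of_forall_mem measurableSet_Icc fun r hr => ?_)
    have hr0 : 0 < r := by linarith [hr.1]
    rw [norm_of_nonneg (by positivity)]
    refine (div_mul_log_div_sq_le hR hr0 (norm_nonneg _) (hM r)).trans ?_
    gcongr
    exacts [max_le hr.2 (by linarith), hr.1]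
  refine (hfar.union hnear).mono_set fun r (hr : 0 < r) => ?_
  rcases le_or_gt r (R / 2) with h₁ | h₁
  · exact .inl (.inl ⟨hr, h₁⟩)
  rcases le_or_gt r (2 * R) with h₂ | h₂
  exacts [.inr ⟨h₁.le, h₂⟩, .inl (.inr h₂)]

theorem tendsto_norm_sq_div_log_div_of_norm_le {u : ℝ → E} {C : ℝ} {l : Filter ℝ}
    (hC : ∀ x, ‖u x‖ ≤ C) (hL : Tendsto (fun x => (log (x / R))⁻¹) l (𝓝 0)) :
    Tendsto (fun x => ‖u x‖ ^ 2 / log (x / R)) l (𝓝 0) := by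
  refine isBoundedUnder_le_mul_tendsto_zero ⟨C ^ 2, eventually_map.2 (Eventually.of_forall
    fun x => ?_)⟩ hL
  simpa using pow_le_pow_left₀ (norm_nonneg _) (hC x) 2

theorem integral_Ioi_zero_eq_zero_of_hasDerivAt {F : Type*} [NormedAddCommGroup F]
    [NormedSpace ℝ F] [CompleteSpace F] {G g : ℝ → F} {c : ℝ} (hc : 0 < c)
    (hderiv : ∀ x ∈ Ioi 0, x ≠ c → HasDerivAt G (g x) x) (hg : IntegrableOn g (Ioi 0))
    (hGc : ContinuousAt G c) (h0 : Tendsto G (𝓝[>] 0) (𝓝 (G c)))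
    (htop : Tendsto G atTop (𝓝 (G c))) :
    ∫ x in Ioi 0, g x = 0 := by
  have hleft : ∫ x in Ioc 0 c, g x = 0 := by
    rw [← intervalIntegral.integral_of_le hc.le,
      intervalIntegral.integral_eq_sub_of_hasDerivAt_of_tendsto hc
        (fun x hx => hderiv x hx.1 hx.2.ne) ((intervalIntegrable_iff_integrableOn_Ioc_of_le hc.le).2
          (hg.mono_set Ioc_subset_Ioi_self)) h0 (hGc.tendsto.mono_left nhdsWithin_le_nhds),
      sub_self]
  have hright : ∫ x in Ioi c, g x = 0 := by
    rw [integral_Ioi_of_hasDerivAt_of_tendsto hGc.continuousWithinAt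
      (fun x hx => hderiv x (hc.trans hx) hx.ne') (hg.mono_set (Ioi_subset_Ioi hc.le)) htop,
      sub_self]
  rw [← Ioc_union_Ioi_eq_Ioi hc.le, setIntegral_union (Ioc_disjoint_Ioi le_rfl) measurableSet_Ioi
    (hg.mono_set Ioc_subset_Ioi_self) (hg.mono_set (Ioi_subset_Ioi hc.le)), hleft, hright, add_zero]

variable [InnerProductSpace ℝ E]

theorem two_mul_inner_sub_le (a b : E) (t : ℝ) (hr : 0 < r) :
    2 * t * ⟪a, b⟫ - t ^ 2 * ‖a‖ ^ 2 / r ≤ r * ‖b‖ ^ 2 := by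
  have h := norm_sub_sq_real (r • b) (t • a)
  rw [norm_smul, norm_smul, real_inner_smul_left, real_inner_smul_right, Real.norm_eq_abs,
    Real.norm_eq_abs, mul_pow, mul_pow, sq_abs, sq_abs, real_inner_comm] at h
  have hq : 2 * t * ⟪a, b⟫ - t ^ 2 * ‖a‖ ^ 2 / r = (r ^ 2 * ‖b‖ ^ 2 - ‖r • b - t • a‖ ^ 2) / r := by
    rw [h]; field_simp; ring
  rw [hq, div_le_iff₀ hr]
  nlinarith [sq_nonneg ‖r • b - t • a‖]

theorem abs_two_inner_div_le (a b : E) (L : ℝ) (hr : 0 < r) :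
    |2 * ⟪a, b⟫ / L| ≤ ‖a‖ ^ 2 / (r * L ^ 2) + r * ‖b‖ ^ 2 := by
  have hpos := two_mul_inner_sub_le a b L⁻¹ hr
  have hneg := two_mul_inner_sub_le a b (-L⁻¹) hr
  rw [abs_le]
  constructor <;> ring_nf at hpos hneg ⊢ <;> linarith

theorem hasDerivAt_norm_sq_div_log_div {u : ℝ → E} {u' : E} (hu : HasDerivAt u u' r)
    (hR : R ≠ 0) (hr : r ≠ 0) (hL : log (r / R) ≠ 0) :
    HasDerivAt (fun x => ‖u x‖ ^ 2 / log (x / R))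
      (2 * ⟪u r, u'⟫ / log (r / R) - ‖u r‖ ^ 2 / (r * log (r / R) ^ 2)) r := by
  refine (hu.norm_sq.div (hasDerivAt_log_div hR hr) hL).congr_deriv ?_
  field_simp

theorem tendsto_norm_sq_div_log_div_nhdsNE {u : ℝ → E} {u' : E} (hu : HasDerivAt u u' R)
    (huR : u R = 0) (hR : 0 < R) :
    Tendsto (fun x => ‖u x‖ ^ 2 / log (x / R)) (𝓝[≠] R) (𝓝 0) := by
  have hnum := hasDerivAt_iff_tendsto_slope.1 hu.norm_sq
  have hden := hasDerivAt_iff_tendsto_slope.1 (hasDerivAt_log_div hR.ne' hR.ne')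
  rw [huR, inner_zero_left, mul_zero] at hnum
  have hquot := hnum.div hden (inv_ne_zero hR.ne')
  rw [zero_div] at hquot
  refine hquot.congr' ?_
  filter_upwards [self_mem_nhdsWithin] with x hx
  have hxR : x - R ≠ 0 := sub_ne_zero.2 hx
  rw [Pi.div_apply, slope_def_field, slope_def_field, huR, norm_zero, div_self hR.ne', log_one,
    zero_pow two_ne_zero, sub_zero, sub_zero, div_div_div_cancel_right₀ hxR]

theorem integral_deriv_norm_sq_div_log_div_eq_zero {u : ℝ → E} {C : ℝ} (hR : 0 < R)
    (hu : Differentiable ℝ u) (huR : u R = 0) (hC : ∀ x, ‖u x‖ ≤ C)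
    (hint : IntegrableOn (fun r => 2 * ⟪u r, deriv u r⟫ / log (r / R) -
      ‖u r‖ ^ 2 / (r * log (r / R) ^ 2)) (Ioi 0)) :
    ∫ r in Ioi 0, (2 * ⟪u r, deriv u r⟫ / log (r / R) - ‖u r‖ ^ 2 / (r * log (r / R) ^ 2)) = 0 := by
  have hGR : ‖u R‖ ^ 2 / log (R / R) = 0 := by rw [huR, norm_zero, zero_pow two_ne_zero, zero_div]
  refine integral_Ioi_zero_eq_zero_of_hasDerivAt hR (fun x hx hne =>
    hasDerivAt_norm_sq_div_log_div (hu x).hasDerivAt hR.ne' (ne_of_gt hx)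
      (log_div_ne_zero hR hx hne)) hint ?_ ?_ ?_
  · rw [← continuousWithinAt_compl_self, ContinuousWithinAt, hGR]
    exact tendsto_norm_sq_div_log_div_nhdsNE (hu R).hasDerivAt huR hR
  · rw [hGR]
    exact tendsto_norm_sq_div_log_div_of_norm_le hC (tendsto_inv_log_div_nhdsGT_zero hR)
  · rw [hGR]
    exact tendsto_norm_sq_div_log_div_of_norm_le hC (tendsto_inv_log_div_atTop hR)

theorem integral_norm_sq_div_mul_log_div_sq_le {u : ℝ → E} {C M : ℝ} (hR : 0 < R)
    (hu : ContDiff ℝ 1 u) (huR : u R = 0) (hC : ∀ x, ‖u x‖ ≤ C) (hM : ∀ x, ‖deriv u x‖ ≤ M)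
    (hint : IntegrableOn (fun r => r * ‖deriv u r‖ ^ 2) (Ioi 0)) :
    1 / 4 * ∫ r in Ioi 0, ‖u r‖ ^ 2 / (r * log (r / R) ^ 2) ≤
      ∫ r in Ioi 0, r * ‖deriv u r‖ ^ 2 := by
  set q := fun r => ‖u r‖ ^ 2 / (r * log (r / R) ^ 2)
  set g := fun r => 2 * ⟪u r, deriv u r⟫ / log (r / R) - q r
  have hdiff : Differentiable ℝ u := hu.differentiable one_ne_zero
  have hq : IntegrableOn q (Ioi 0) := by
    refine integrableOn_norm_sq_div_mul_log_div_sq (M := M) hR hu.continuous hC fun x => ?_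
    simpa [huR] using convex_univ.norm_image_sub_le_of_norm_deriv_le (fun y _ => hdiff y)
      (fun y _ => hM y) (mem_univ R) (mem_univ x)
  have hg : IntegrableOn g (Ioi 0) := by
    refine Integrable.sub (Integrable.mono' (hq.add hint) ?_ (ae_restrict_of_forall_mem
      measurableSet_Ioi fun r hr => abs_two_inner_div_le _ _ _ hr)) hq
    exact (((hu.continuous.inner (hu.continuous_deriv le_rfl)).const_mul 2).measurable.div
      (by fun_prop)).aestronglyMeasurable
  calc 1 / 4 * ∫ r in Ioi 0, q r = ∫ r in Ioi 0, (q r / 4 + g r / 2) := by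
        rw [integral_add (hq.div_const 4) (hg.div_const 2), integral_div, integral_div,
          integral_deriv_norm_sq_div_log_div_eq_zero hR hdiff huR hC hg]
        ring
    _ ≤ ∫ r in Ioi 0, r * ‖deriv u r‖ ^ 2 := by
      refine setIntegral_mono_on ((hq.div_const 4).add (hg.div_const 2)) hint measurableSet_Ioi
        fun r (hr : 0 < r) => ?_
      refine Eq.trans_le ?_ (two_mul_inner_sub_le (u r) (deriv u r) (2 * log (r / R))⁻¹ hr)
      simp only [q, g]
      ring

end LogHardy

/-- one-dimensional Hardy inequality with logarithmic weight. -/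
theorem one_dim_log_hardy (φ : ℝ → ℂ) (hφ : ContDiff ℝ 1 φ) (hsupp : HasCompactSupport φ)
    (R : ℝ) (hR : 0 < R) :
    (∫ r in Set.Ioi (0 : ℝ), r * ‖deriv φ r‖ ^ 2) ≥
      (1 / 4) * ∫ r in Set.Ioi (0 : ℝ), ‖φ r - φ R‖ ^ 2 / (r * (Real.log (r / R)) ^ 2) := by
  have hφ' : Continuous (deriv φ) := hφ.continuous_deriv le_rfl
  obtain ⟨C, hC⟩ := hsupp.exists_bound_of_continuous hφ.continuous
  obtain ⟨M, hM⟩ := hsupp.deriv.exists_bound_of_continuous hφ'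
  have hsupp' : HasCompactSupport fun r => r * ‖deriv φ r‖ ^ 2 :=
    HasCompactSupport.mul_left (f := id)
      (hsupp.deriv.comp_left (g := fun z : ℂ => ‖z‖ ^ 2) (by simp))
  have hint : IntegrableOn (fun r => r * ‖deriv φ r‖ ^ 2) (Ioi 0) :=
    ((continuous_id.mul (hφ'.norm.pow 2)).integrable_of_hasCompactSupport hsupp').integrableOn
  have hu : ContDiff ℝ 1 (fun r => φ r - φ R) := hφ.sub contDiff_const
  have hd : deriv (fun r => φ r - φ R) = deriv φ := deriv_sub_const_fun _
  have h := integral_norm_sq_div_mul_log_div_sq_le (C := C + C) (M := M) hR hu (sub_self _)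
    (fun x => (norm_sub_le _ _).trans (add_le_add (hC x) (hC R)))
    (by rw [hd]; exact hM) (by rw [hd]; exact hint)
  rw [hd] at h
  exact h
end

section
/- Let ν, μ, λ ∈ ℝ satisfy |ν| + √(μ² + λ²) ≤ 1. If (k + λ)² + μ² − ν² = 0 for some integer k ≠ 0, then μ = 0. -/
/-!
Since `|λ| ≤ √(μ² + λ²)` and a nonzero integer has absolute value at least one,
`|k + λ| ≥ 1 - |λ| ≥ 1 - √(μ² + λ²) ≥ |ν|`. Hence `(k + λ)² ≥ ν²`, and the relation
`(k + λ)² + μ² = ν²` leaves no room for `μ² > 0`.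
-/

theorem one_sub_abs_le_abs_intCast_add {R : Type*} [Ring R] [LinearOrder R] [IsStrictOrderedRing R]
    {k : ℤ} (hk : k ≠ 0) (x : R) : 1 - |x| ≤ |(k : R) + x| := by
  have hk1 : (1 : R) ≤ |(k : R)| := by
    rw [← Int.cast_abs]
    exact_mod_cast Int.one_le_abs hk
  calc 1 - |x| ≤ |(k : R)| - |x| := sub_le_sub_right hk1 _
    _ ≤ |(k : R) + x| := abs_sub_abs_le_abs_add _ _

/-- under the criticality condition, if (k+λ)² + μ² − ν² = 0 for some
nonzero integer k, then μ = 0. -/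
theorem delta_zero_imp_mu_zero (ν μ lam : ℝ) (h : |ν| + Real.sqrt (μ ^ 2 + lam ^ 2) ≤ 1)
    (k : ℤ) (hk : k ≠ 0) (h0 : ((k : ℝ) + lam) ^ 2 + μ ^ 2 - ν ^ 2 = 0) :
    μ = 0 := by
  have hlam : |lam| ≤ √(μ ^ 2 + lam ^ 2) :=
    Real.abs_le_sqrt (le_add_of_nonneg_left (sq_nonneg μ))
  have hν : |ν| ≤ |(k : ℝ) + lam| := by
    linarith [one_sub_abs_le_abs_intCast_add hk lam]
  have hsq : ν ^ 2 ≤ ((k : ℝ) + lam) ^ 2 := sq_le_sq.mpr hν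
  have hμ : μ ^ 2 ≤ 0 := by linarith
  exact pow_eq_zero_iff two_ne_zero |>.mp (le_antisymm hμ (sq_nonneg μ))
end

section
/- Let 0 < γ < 1/2, let D be a real 2×2 matrix, let A = (A⁺, A⁻), Ã = (Ã⁺, Ã⁻) ∈ ℂ², and let f = (f⁺,f⁻), g = (g⁺,g⁻) : (0,∞) → ℂ² satisfy lim_{r→0⁺} r^{−1/2} | f(r) − D·(A⁺ r^γ, A⁻ r^{−γ}) | = 0 and lim_{r→0⁺} r^{−1/2} | g(r) − D·(Ã⁺ r^γ, Ã⁻ r^{−γ}) | = 0. Then lim_{r→0⁺} [ f⁺(r) conj(g⁻(r)) − f⁻(r) conj(g⁺(r)) ] = det(D) · ( A⁺ conj(Ã⁻) − A⁻ conj(Ã⁺) ). -/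
/-! The form `ω(x, y) = x₀ ȳ₁ - x₁ ȳ₀` satisfies `ω(D x, D y) = det D · ω(x, y)` for real `D`, and on
the leading terms `(A⁺ r^γ, A⁻ r^(-γ))`, `(Ã⁺ r^γ, Ã⁻ r^(-γ))` it is the constant
`A⁺ conj Ã⁻ - A⁻ conj Ã⁺`, since `r^γ r^(-γ) = 1`. Replacing `f`, `g` by their leading terms changes
`ω` by `o(r^(1/2)) · O(r^(-γ)) = o(r^(1/2 - γ))`, which tends to `0` because `γ < 1/2`. -/

open Real Filter Topology Asymptotics
open scoped Matrix

section Asymptotics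

variable {α R : Type*} [NormedRing R] [StarRing R] [NormedStarGroup R] {l : Filter α}

theorem isLittleO_star_left_iff {F : Type*} [Norm F] {g : α → F} {f : α → R} :
    (fun x => star (f x)) =o[l] g ↔ f =o[l] g := by
  simp only [← isLittleO_norm_left (f' := f), ← isLittleO_norm_left (f' := fun x => star (f x)),
    norm_star]

theorem isBigO_star_left_iff {F : Type*} [Norm F] {g : α → F} {f : α → R} :
    (fun x => star (f x)) =O[l] g ↔ f =O[l] g := by
  simp only [← isBigO_norm_left (f' := f), ← isBigO_norm_left (f' := fun x => star (f x)),
    norm_star]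

theorem tendsto_mul_star_sub_mul_star {a a' b b' : α → R} {s t : α → ℝ}
    (ha : (fun x => a x - a' x) =o[l] s) (hb : (fun x => b x - b' x) =o[l] s)
    (ha' : a' =O[l] t) (hb' : b' =O[l] t) (hst : s =O[l] t)
    (hlim : Tendsto (fun x => s x * t x) l (𝓝 0)) :
    Tendsto (fun x => a x * star (b x) - a' x * star (b' x)) l (𝓝 0) := by
  have hb_star : (fun x => star (b x) - star (b' x)) =o[l] s := by
    simpa only [star_sub] using isLittleO_star_left_iff.2 hb
  have hb_big : (fun x => star (b x)) =O[l] t := by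
    refine isBigO_star_left_iff.2 ?_
    simpa using hb'.add (hb.isBigO.trans hst)
  have key : (fun x => (a x - a' x) * star (b x) + a' x * (star (b x) - star (b' x)))
      =o[l] fun x => s x * t x := by
    refine (ha.mul_isBigO hb_big).add ?_
    simpa only [mul_comm (s _)] using ha'.mul_isLittleO hb_star
  refine (key.isBigO.trans_tendsto hlim).congr fun x => ?_
  noncomm_ring

theorem isBigO_mulVec_apply {ι 𝕜 : Type*} [Fintype ι] [NormedRing 𝕜] {M : Matrix ι ι 𝕜}
    {x : α → ι → 𝕜} {t : α → ℝ} (hx : ∀ j, (fun a => x a j) =O[l] t) (i : ι) :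
    (fun a => (M *ᵥ x a) i) =O[l] t := by
  simp only [Matrix.mulVec, dotProduct]
  exact IsBigO.fun_sum fun j _ => (hx j).const_mul_left _

end Asymptotics

theorem rpow_isBigO_rpow_nhdsGT_zero {a b : ℝ} (hab : a ≤ b) :
    (fun r : ℝ => r ^ b) =O[𝓝[>] 0] fun r => r ^ a := by
  refine IsBigO.of_bound 1 ?_
  filter_upwards [Ioo_mem_nhdsGT one_pos] with r ⟨hr0, hr1⟩
  rw [one_mul, norm_of_nonneg (rpow_nonneg hr0.le _), norm_of_nonneg (rpow_nonneg hr0.le _)]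
  exact rpow_le_rpow_of_exponent_ge hr0 hr1.le hab

theorem tendsto_rpow_nhdsGT_zero {c : ℝ} (hc : 0 < c) :
    Tendsto (fun r : ℝ => r ^ c) (𝓝[>] 0) (𝓝 0) := by
  have := (continuous_rpow_const hc.le).tendsto 0
  rw [zero_rpow hc.ne'] at this
  exact this.mono_left nhdsWithin_le_nhds

theorem isLittleO_rpow_of_tendsto_sqrt_mul_rpow_neg {E : Type*} [SeminormedAddCommGroup E]
    {p q : ℝ → E} {κ : ℝ}
    (h : Tendsto (fun r => √(‖p r‖ ^ 2 + ‖q r‖ ^ 2) * r ^ (-κ)) (𝓝[>] 0) (𝓝 0)) :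
    p =o[𝓝[>] 0] (fun r => r ^ κ) ∧ q =o[𝓝[>] 0] (fun r => r ^ κ) := by
  have hS : (fun r => √(‖p r‖ ^ 2 + ‖q r‖ ^ 2)) =o[𝓝[>] 0] fun r => r ^ κ := by
    refine (isLittleO_iff_tendsto' ?_).2 (h.congr' ?_) <;>
      filter_upwards [self_mem_nhdsWithin] with r (hr : 0 < r)
    · exact fun h0 => absurd h0 (rpow_pos_of_pos hr κ).ne'
    rw [rpow_neg (le_of_lt hr), div_eq_mul_inv]
  refine ⟨(isBigO_of_le _ fun r => ?_).trans_isLittleO hS,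
    (isBigO_of_le _ fun r => ?_).trans_isLittleO hS⟩
  all_goals
    rw [norm_of_nonneg (sqrt_nonneg _)]
    exact le_sqrt_of_sq_le (by nlinarith [sq_nonneg ‖p r‖, sq_nonneg ‖q r‖])

def wronskian (x y : Fin 2 → ℂ) : ℂ := x 0 * starRingEnd ℂ (y 1) - x 1 * starRingEnd ℂ (y 0)

theorem tendsto_wronskian_sub_wronskian {α : Type*} {l : Filter α} {F G U V : α → Fin 2 → ℂ}
    {s t : α → ℝ} (hF : ∀ i, (fun x => F x i - U x i) =o[l] s)
    (hG : ∀ i, (fun x => G x i - V x i) =o[l] s) (hU : ∀ i, (fun x => U x i) =O[l] t)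
    (hV : ∀ i, (fun x => V x i) =O[l] t) (hst : s =O[l] t)
    (hlim : Tendsto (fun x => s x * t x) l (𝓝 0)) :
    Tendsto (fun x => wronskian (F x) (G x) - wronskian (U x) (V x)) l (𝓝 0) := by
  have h01 := tendsto_mul_star_sub_mul_star (hF 0) (hG 1) (hU 0) (hV 1) hst hlim
  have h10 := tendsto_mul_star_sub_mul_star (hF 1) (hG 0) (hU 1) (hV 0) hst hlim
  simpa only [wronskian, starRingEnd_apply, sub_zero, sub_sub_sub_comm] using h01.sub h10

theorem wronskian_mulVec (M : Matrix (Fin 2) (Fin 2) ℝ) (x y : Fin 2 → ℂ) :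
    wronskian (M.map (fun t => (t : ℂ)) *ᵥ x) (M.map (fun t => (t : ℂ)) *ᵥ y) =
      M.det * wronskian x y := by
  simp only [wronskian, Matrix.mulVec, dotProduct, Fin.sum_univ_two, Matrix.map_apply,
    Matrix.det_fin_two, map_add, map_mul, Complex.conj_ofReal]
  push_cast
  ring

noncomputable def powerPair (γ : ℝ) (a b : ℂ) (r : ℝ) : Fin 2 → ℂ :=
  ![a * ((r ^ γ : ℝ) : ℂ), b * ((r ^ (-γ) : ℝ) : ℂ)]

theorem wronskian_powerPair {γ r : ℝ} (hr : 0 < r) (a b c d : ℂ) :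
    wronskian (powerPair γ a b r) (powerPair γ c d r) =
      a * starRingEnd ℂ d - b * starRingEnd ℂ c := by
  have hinv : ((r ^ γ : ℝ) : ℂ) * ((r ^ (-γ) : ℝ) : ℂ) = 1 := by
    rw [← Complex.ofReal_mul, ← rpow_add hr, add_neg_cancel, rpow_zero, Complex.ofReal_one]
  simp only [wronskian, powerPair, Matrix.cons_val_zero, Matrix.cons_val_one, map_mul,
    Complex.conj_ofReal]
  linear_combination (a * starRingEnd ℂ d - b * starRingEnd ℂ c) * hinv

theorem isBigO_powerPair {γ : ℝ} (hγ : 0 ≤ γ) (a b : ℂ) (i : Fin 2) :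
    (fun r => powerPair γ a b r i) =O[𝓝[>] 0] fun r => r ^ (-γ) := by
  have hcast (e : ℝ) : (fun r : ℝ => ((r ^ e : ℝ) : ℂ)) =O[𝓝[>] 0] fun r => r ^ e :=
    isBigO_of_le _ fun r => (Complex.norm_real _).le
  fin_cases i
  · exact ((hcast γ).trans (rpow_isBigO_rpow_nhdsGT_zero (by linarith))).const_mul_left a
  · exact (hcast (-γ)).const_mul_left b

/-- boundary limit of the Wronskian-type expression in the subcritical
case 0 < δ < 1/4. -/
theorem wronskian_limit_subcritical (γ : ℝ) (hγ0 : 0 < γ) (hγ : γ < 1 / 2)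
    (D : Matrix (Fin 2) (Fin 2) ℝ) (Ap Am Bp Bm : ℂ) (fp fm gp gm : ℝ → ℂ)
    (hf : Tendsto (fun r : ℝ =>
        Real.sqrt
          (‖(fp r -
              (D.map (fun t => (t : ℂ))).mulVec
                ![Ap * ((r ^ γ : ℝ) : ℂ), Am * ((r ^ (-γ) : ℝ) : ℂ)] 0)‖ ^ 2 +
            ‖(fm r -
              (D.map (fun t => (t : ℂ))).mulVec
                ![Ap * ((r ^ γ : ℝ) : ℂ), Am * ((r ^ (-γ) : ℝ) : ℂ)] 1)‖ ^ 2) *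
          r ^ (-(1 / 2 : ℝ))) (nhdsWithin 0 (Set.Ioi 0)) (nhds 0))
    (hg : Tendsto (fun r : ℝ =>
        Real.sqrt
          (‖(gp r -
              (D.map (fun t => (t : ℂ))).mulVec
                ![Bp * ((r ^ γ : ℝ) : ℂ), Bm * ((r ^ (-γ) : ℝ) : ℂ)] 0)‖ ^ 2 +
            ‖(gm r -
              (D.map (fun t => (t : ℂ))).mulVec
                ![Bp * ((r ^ γ : ℝ) : ℂ), Bm * ((r ^ (-γ) : ℝ) : ℂ)] 1)‖ ^ 2) *
          r ^ (-(1 / 2 : ℝ))) (nhdsWithin 0 (Set.Ioi 0)) (nhds 0)) :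
    Tendsto (fun r : ℝ => fp r * (starRingEnd ℂ) (gm r) - fm r * (starRingEnd ℂ) (gp r))
      (nhdsWithin 0 (Set.Ioi 0))
      (nhds (((D.det : ℝ) : ℂ) * (Ap * (starRingEnd ℂ) Bm - Am * (starRingEnd ℂ) Bp))) := by
  set M := D.map (fun t => (t : ℂ))
  obtain ⟨hfp, hfm⟩ := isLittleO_rpow_of_tendsto_sqrt_mul_rpow_neg hf
  obtain ⟨hgp, hgm⟩ := isLittleO_rpow_of_tendsto_sqrt_mul_rpow_neg hg
  have hlim : Tendsto (fun r : ℝ => r ^ (1 / 2 : ℝ) * r ^ (-γ)) (𝓝[>] 0) (𝓝 0) :=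
    (tendsto_rpow_nhdsGT_zero (sub_pos.2 hγ)).congr' <|
      eventually_nhdsWithin_of_forall fun r (hr : 0 < r) => by
        simp only [← rpow_add hr, sub_eq_add_neg]
  have hW := tendsto_wronskian_sub_wronskian (F := fun r => ![fp r, fm r])
    (G := fun r => ![gp r, gm r]) (U := fun r => M *ᵥ powerPair γ Ap Am r)
    (V := fun r => M *ᵥ powerPair γ Bp Bm r) (Fin.forall_fin_two.2 ⟨hfp, hfm⟩)
    (Fin.forall_fin_two.2 ⟨hgp, hgm⟩) (isBigO_mulVec_apply (isBigO_powerPair hγ0.le Ap Am))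
    (isBigO_mulVec_apply (isBigO_powerPair hγ0.le Bp Bm))
    (rpow_isBigO_rpow_nhdsGT_zero (by linarith)) hlim
  have hW' := hW.add_const
    (((D.det : ℝ) : ℂ) * (Ap * (starRingEnd ℂ) Bm - Am * (starRingEnd ℂ) Bp))
  rw [zero_add] at hW'
  refine hW'.congr' ?_
  filter_upwards [self_mem_nhdsWithin] with r (hr : 0 < r)
  rw [wronskian_mulVec, wronskian_powerPair hr, sub_add_cancel]
  rfl
end
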